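/- arXiv:1512.00650 — 2 statements merged into one kernel-verified Lean document; each statement's English description precedes it below -/
import Mathlib

section
/- Every weakly almost periodic set Γ ⊆ ℝⁿ possesses a uniform density: there exists a number D(Γ) such that for every ε > 0 there exists R_ε > 0 with |Card(Γ ∩ B(x,R))/Vol(B_R) − D(Γ)| < ε for all R > R_ε and all x ∈ ℝⁿ. -/
open MeasureTheory Metric Set Filter

noncomputable def volBall (n : ℕ) (R : ℝ) : ℝ :=
  (volume (Metric.ball (0 : Fin n → ℝ) R)).toReal

noncomputable def DRplus {n : ℕ} (R : ℝ) (Γ Γ' : Set (Fin n → ℝ)) : ℝ :=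
  ⨆ x : Fin n → ℝ, (((symmDiff Γ Γ') ∩ Metric.ball x R).ncard : ℝ) / volBall n R

def RelDense {n : ℕ} (N : Set (Fin n → ℝ)) : Prop :=
  ∃ L > (0:ℝ), ∀ x : Fin n → ℝ, ∃ v ∈ N, dist v x < L

def UnifDiscrete {n : ℕ} (Γ : Set (Fin n → ℝ)) : Prop :=
  ∃ r > (0:ℝ), ∀ x : Fin n → ℝ, (Γ ∩ Metric.ball x r).Subsingleton

def Delone {n : ℕ} (Γ : Set (Fin n → ℝ)) : Prop :=
  UnifDiscrete Γ ∧ RelDense Γ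

def transSet {n : ℕ} (Γ : Set (Fin n → ℝ)) (ε R : ℝ) : Set (Fin n → ℝ) :=
  {v | ∀ R' ≥ R, DRplus R' ((· + v) '' Γ) Γ < ε}

def IsAPP {n : ℕ} (Γ : Set (Fin n → ℝ)) : Prop :=
  Delone Γ ∧ ∀ ε > (0:ℝ), ∃ Rε > (0:ℝ), RelDense (transSet Γ ε Rε)

def IsWAP {n : ℕ} (Γ : Set (Fin n → ℝ)) : Prop :=
  Delone Γ ∧ ∀ ε > (0:ℝ), ∃ R > (0:ℝ), ∀ x y : Fin n → ℝ, ∃ v : Fin n → ℝ,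
    ((symmDiff (Metric.ball x R ∩ Γ) ((· - v) '' (Metric.ball y R ∩ Γ))).ncard : ℝ)
      ≤ ε * volBall n R

/-!
Averaging the count `N_R(y) = #(Γ ∩ B(y, R))` over `y ∈ B(x, S ± R)` and exchanging sum and
integral gives
`(min N_R) · Vol(B_{S-R}) ≤ #(Γ ∩ B(x, S)) · Vol(B_R) ≤ (max N_R) · Vol(B_{S+R})`.
Weak almost periodicity at scale `R` says that `N_R` varies by at most `ε · Vol(B_R)`, so for
`S ≫ R` every density `#(Γ ∩ B(x, S)) / Vol(B_S)` lies within `2ε` of `N_R(0) / Vol(B_R)`.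
As `ε → 0` these approximate densities form a Cauchy family, whose limit is `D(Γ)`.
-/

open scoped ENNReal symmDiff Topology

theorem Set.ncard_le_ncard_add_ncard_symmDiff {α : Type*} {s t : Set α} (hs : s.Finite)
    (ht : t.Finite) : s.ncard ≤ t.ncard + (s ∆ t).ncard := by
  calc s.ncard ≤ (s \ t).ncard + t.ncard := ncard_le_ncard_sdiff_add_ncard s t ht
    _ ≤ (s ∆ t).ncard + t.ncard := by
        gcongr
        · exact (hs.union ht).subset symmDiff_subset_union
        · exact subset_union_left
    _ = t.ncard + (s ∆ t).ncard := add_comm _ _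

theorem lintegral_ncard_inter_ball {α : Type*} [PseudoMetricSpace α] [MeasurableSpace α]
    [OpensMeasurableSpace α] (μ : Measure α) (F : Finset α) (R : ℝ) (A : Set α) :
    ∫⁻ y in A, ((↑F ∩ ball y R : Set α).ncard : ℝ≥0∞) ∂μ = ∑ γ ∈ F, μ (ball γ R ∩ A) := by
  classical
  have hcount : ∀ y, ((↑F ∩ ball y R : Set α).ncard : ℝ≥0∞) =
      ∑ γ ∈ F, (ball γ R).indicator 1 y := by
    intro y
    have hset : (↑F ∩ ball y R : Set α) = ↑(F.filter (y ∈ ball · R)) := by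
      ext γ
      simp [mem_ball_comm (x := y)]
    rw [hset, ncard_coe_finset]
    simp [indicator_apply, Finset.sum_boole]
  simp_rw [hcount]
  rw [lintegral_finsetSum _ fun γ _ => measurable_one.indicator measurableSet_ball]
  simp_rw [lintegral_indicator_one measurableSet_ball, Measure.restrict_apply measurableSet_ball]

theorem exists_forall_abs_sub_lt_of_forall_approx {ι α : Type*} {l : Filter ι} [l.NeBot]
    [Nonempty α] {f : ι → α → ℝ} (h : ∀ ε > 0, ∃ c, ∀ᶠ i in l, ∀ a, |f i a - c| ≤ ε) :
    ∃ D, ∀ ε > 0, ∀ᶠ i in l, ∀ a, |f i a - D| < ε := by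
  obtain ⟨a₀⟩ := ‹Nonempty α›
  have hball : ∀ {ε c}, (∀ᶠ i in l, ∀ a, |f i a - c| ≤ ε) →
      ∀ᶠ i in l, f i a₀ ∈ closedBall c ε :=
    fun hc => hc.mono fun i hi => by simpa [Real.dist_eq] using hi a₀
  have hcauchy : Cauchy (map (f · a₀) l) := by
    refine Metric.cauchy_iff.2 ⟨inferInstance, fun ε hε => ?_⟩
    obtain ⟨c, hc⟩ := h (ε / 3) (by positivity)
    refine ⟨closedBall c (ε / 3), hball hc, fun y hy z hz => ?_⟩
    calc dist y z ≤ dist y c + dist z c := dist_triangle_right _ _ _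
      _ ≤ ε / 3 + ε / 3 := add_le_add hy hz
      _ < ε := by linarith
  obtain ⟨D, hD⟩ := cauchy_map_iff_exists_tendsto.1 hcauchy
  refine ⟨D, fun ε hε => ?_⟩
  obtain ⟨c, hc⟩ := h (ε / 3) (by positivity)
  have hDc : |D - c| ≤ ε / 3 := by
    simpa [Real.dist_eq] using isClosed_closedBall.mem_of_tendsto hD (hball hc)
  filter_upwards [hc] with i hi a
  calc |f i a - D| ≤ |f i a - c| + |c - D| := abs_sub_le _ _ _
    _ < ε := by linarith [hi a, abs_sub_comm c D]

section Euclidean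

variable {n : ℕ}

theorem volume_ball_eq_ofReal_volBall (x : Fin n → ℝ) (r : ℝ) :
    volume (ball x r) = ENNReal.ofReal (volBall n r) := by
  rw [volBall, ENNReal.ofReal_toReal measure_ball_lt_top.ne, Measure.addHaar_ball_center]

theorem volBall_nonneg (r : ℝ) : 0 ≤ volBall n r := ENNReal.toReal_nonneg

theorem volBall_eq {r : ℝ} (hr : 0 < r) : volBall n r = (2 * r) ^ n := by
  rw [volBall, Real.volume_pi_ball _ hr, Fintype.card_fin, ENNReal.toReal_ofReal (by positivity)]

theorem volBall_pos {r : ℝ} (hr : 0 < r) : 0 < volBall n r := by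
  rw [volBall_eq hr]; positivity

theorem tendsto_volBall_add_div_volBall (R : ℝ) :
    Tendsto (fun S => volBall n (S + R) / volBall n S) atTop (𝓝 1) := by
  have hlim : Tendsto (fun S : ℝ => (1 + R * S⁻¹) ^ n) atTop (𝓝 ((1 + R * 0) ^ n)) :=
    ((tendsto_inv_atTop_zero.const_mul R).const_add 1).pow n
  rw [mul_zero, add_zero, one_pow] at hlim
  refine hlim.congr' ?_
  filter_upwards [eventually_gt_atTop 0, eventually_gt_atTop (-R)] with S hS hSR
  rw [volBall_eq hS, volBall_eq (by linarith), ← div_pow]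
  congr 1
  field_simp

theorem UnifDiscrete.finite_inter_ball {Γ : Set (Fin n → ℝ)} (hΓ : UnifDiscrete Γ)
    (x : Fin n → ℝ) (S : ℝ) : (Γ ∩ ball x S).Finite := by
  obtain ⟨r, hr, hsub⟩ := hΓ
  obtain ⟨t, -, ht, hcover⟩ := finite_approx_of_totallyBounded
    ((isCompact_closedBall x S).totallyBounded.subset ball_subset_closedBall) r hr
  refine (ht.biUnion fun y _ => (hsub y).finite).subset ?_
  rintro γ ⟨hγΓ, hγ⟩
  obtain ⟨y, hy, hγy⟩ := mem_iUnion₂.1 (hcover hγ)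
  exact mem_iUnion₂.2 ⟨y, hy, hγΓ, hγy⟩

theorem UnifDiscrete.ncard_inter_ball_le_add {Γ : Set (Fin n → ℝ)} (hΓ : UnifDiscrete Γ)
    {ε R : ℝ} {x y : Fin n → ℝ}
    (h : ∃ v : Fin n → ℝ,
      ((symmDiff (ball x R ∩ Γ) ((· - v) '' (ball y R ∩ Γ))).ncard : ℝ) ≤ ε * volBall n R) :
    ((Γ ∩ ball x R).ncard : ℝ) ≤ (Γ ∩ ball y R).ncard + ε * volBall n R := by
  obtain ⟨v, hv⟩ := h
  rw [inter_comm Γ, inter_comm Γ,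
    ← ncard_image_of_injective (ball y R ∩ Γ) (sub_left_injective (b := v))]
  have hfin : ∀ z, (ball z R ∩ Γ).Finite := fun z => inter_comm Γ _ ▸ hΓ.finite_inter_ball z R
  have hcard : ((ball x R ∩ Γ).ncard : ℝ) ≤ ((· - v) '' (ball y R ∩ Γ)).ncard +
      ((ball x R ∩ Γ) ∆ ((· - v) '' (ball y R ∩ Γ))).ncard := by
    exact_mod_cast ncard_le_ncard_add_ncard_symmDiff (hfin x) ((hfin y).image (· - v))
  linarith

theorem UnifDiscrete.ncard_inter_ball_mul_volBall_le {Γ : Set (Fin n → ℝ)}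
    (hΓ : UnifDiscrete Γ) {R C : ℝ} (hC : ∀ y, ((Γ ∩ ball y R).ncard : ℝ) ≤ C)
    (x : Fin n → ℝ) (S : ℝ) :
    ((Γ ∩ ball x S).ncard : ℝ) * volBall n R ≤ C * volBall n (S + R) := by
  set G := (hΓ.finite_inter_ball x S).toFinset
  have hG : (G : Set (Fin n → ℝ)) = Γ ∩ ball x S := Finite.coe_toFinset _
  have hC0 : 0 ≤ C := (Nat.cast_nonneg _).trans (hC x)
  have hinside : ∀ γ ∈ G, ball γ R ∩ ball x (S + R) = ball γ R := by
    intro γ hγ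
    have hγx : dist γ x < S := (Finite.mem_toFinset _).1 hγ |>.2
    exact inter_eq_left.2 (ball_subset_ball' (by linarith))
  rw [← ENNReal.ofReal_le_ofReal_iff (mul_nonneg hC0 (volBall_nonneg _))]
  calc ENNReal.ofReal ((Γ ∩ ball x S).ncard * volBall n R)
      = ∑ γ ∈ G, volume (ball γ R ∩ ball x (S + R)) := by
        rw [Finset.sum_congr rfl fun γ hγ => by rw [hinside γ hγ, volume_ball_eq_ofReal_volBall],
          Finset.sum_const, nsmul_eq_mul, ENNReal.ofReal_mul (Nat.cast_nonneg _),
          ENNReal.ofReal_natCast, ← hG, ncard_coe_finset]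
    _ = ∫⁻ y in ball x (S + R), ((↑G ∩ ball y R : Set _).ncard : ℝ≥0∞) :=
        (lintegral_ncard_inter_ball _ _ _ _).symm
    _ ≤ ∫⁻ _ in ball x (S + R), ENNReal.ofReal C := by
        refine lintegral_mono fun y => ?_
        rw [← ENNReal.ofReal_natCast]
        refine ENNReal.ofReal_le_ofReal ((Nat.cast_le.2 ?_).trans (hC y))
        exact ncard_le_ncard (inter_subset_inter_left _ (hG.trans_subset inter_subset_left))
          (hΓ.finite_inter_ball y R)
    _ = ENNReal.ofReal (C * volBall n (S + R)) := by
        rw [setLIntegral_const, volume_ball_eq_ofReal_volBall, ENNReal.ofReal_mul hC0]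

theorem UnifDiscrete.volBall_mul_le_ncard_inter_ball_mul {Γ : Set (Fin n → ℝ)}
    (hΓ : UnifDiscrete Γ) {R C : ℝ} (hC : ∀ y, C ≤ ((Γ ∩ ball y R).ncard : ℝ))
    (x : Fin n → ℝ) (S : ℝ) :
    C * volBall n (S - R) ≤ ((Γ ∩ ball x S).ncard : ℝ) * volBall n R := by
  set G := (hΓ.finite_inter_ball x S).toFinset
  have hG : (G : Set (Fin n → ℝ)) = Γ ∩ ball x S := Finite.coe_toFinset _
  have hlocal : ∀ y ∈ ball x (S - R), (G : Set _) ∩ ball y R = Γ ∩ ball y R := by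
    intro y hy
    rw [hG, inter_assoc, inter_eq_right.2 (ball_subset_ball' ?_)]
    rw [mem_ball] at hy
    linarith
  rw [← ENNReal.ofReal_le_ofReal_iff (mul_nonneg (Nat.cast_nonneg _) (volBall_nonneg _))]
  calc ENNReal.ofReal (C * volBall n (S - R))
      = ∫⁻ _ in ball x (S - R), ENNReal.ofReal C := by
        rw [setLIntegral_const, volume_ball_eq_ofReal_volBall,
          ENNReal.ofReal_mul' (volBall_nonneg _)]
    _ ≤ ∫⁻ y in ball x (S - R), ((↑G ∩ ball y R : Set _).ncard : ℝ≥0∞) := by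
        refine setLIntegral_mono' measurableSet_ball fun y hy => ?_
        rw [hlocal y hy, ← ENNReal.ofReal_natCast]
        exact ENNReal.ofReal_le_ofReal (hC y)
    _ = ∑ γ ∈ G, volume (ball γ R ∩ ball x (S - R)) := lintegral_ncard_inter_ball _ _ _ _
    _ ≤ ∑ γ ∈ G, volume (ball γ R) := Finset.sum_le_sum fun γ _ => measure_mono inter_subset_left
    _ = ENNReal.ofReal ((Γ ∩ ball x S).ncard * volBall n R) := by
        simp_rw [volume_ball_eq_ofReal_volBall]
        rw [Finset.sum_const, nsmul_eq_mul, ENNReal.ofReal_mul (Nat.cast_nonneg _),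
          ENNReal.ofReal_natCast, ← hG, ncard_coe_finset]

theorem UnifDiscrete.exists_forall_abs_density_sub_le {Γ : Set (Fin n → ℝ)}
    (hΓ : UnifDiscrete Γ) {ε R : ℝ} (hε : 0 < ε) (hR : 0 < R)
    (hW : ∀ x y : Fin n → ℝ, ∃ v : Fin n → ℝ,
      ((symmDiff (ball x R ∩ Γ) ((· - v) '' (ball y R ∩ Γ))).ncard : ℝ) ≤ ε * volBall n R) :
    ∃ c : ℝ, ∀ᶠ S in atTop, ∀ x : Fin n → ℝ,
      |((Γ ∩ ball x S).ncard : ℝ) / volBall n S - c| ≤ 2 * ε := by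
  have hV := volBall_pos (n := n) hR
  set c := ((Γ ∩ ball 0 R).ncard : ℝ) / volBall n R
  have hc : ((Γ ∩ ball 0 R).ncard : ℝ) = c * volBall n R := (div_mul_cancel₀ _ hV.ne').symm
  have hupper : ∀ y, ((Γ ∩ ball y R).ncard : ℝ) ≤ (c + ε) * volBall n R := fun y => by
    linarith [hΓ.ncard_inter_ball_le_add (hW y 0)]
  have hlower : ∀ y, (c - ε) * volBall n R ≤ ((Γ ∩ ball y R).ncard : ℝ) := fun y => by
    linarith [hΓ.ncard_inter_ball_le_add (hW 0 y)]
  have hlim_upper : ∀ᶠ S in atTop, (c + ε) * (volBall n (S + R) / volBall n S) ≤ c + 2 * ε :=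
    ((tendsto_volBall_add_div_volBall R).const_mul (c + ε)).eventually
      (ge_mem_nhds (by linarith))
  have hlim_lower : ∀ᶠ S in atTop, c - 2 * ε ≤ (c - ε) * (volBall n (S - R) / volBall n S) :=
    ((tendsto_volBall_add_div_volBall (-R)).const_mul (c - ε)).eventually
      (le_mem_nhds (by linarith))
  refine ⟨c, ?_⟩
  filter_upwards [hlim_upper, hlim_lower, eventually_gt_atTop 0] with S hSup hSlow hS x
  have hVS := volBall_pos (n := n) hS
  have h₁ : ((Γ ∩ ball x S).ncard : ℝ) ≤ (c + ε) * volBall n (S + R) :=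
    le_of_mul_le_mul_right (by linarith [hΓ.ncard_inter_ball_mul_volBall_le hupper x S]) hV
  have h₂ : (c - ε) * volBall n (S - R) ≤ ((Γ ∩ ball x S).ncard : ℝ) :=
    le_of_mul_le_mul_right (by linarith [hΓ.volBall_mul_le_ncard_inter_ball_mul hlower x S]) hV
  rw [mul_div_assoc'] at hSup hSlow
  rw [le_div_iff₀ hVS] at hSlow
  rw [div_le_iff₀ hVS] at hSup
  rw [abs_le, le_sub_iff_add_le', sub_le_iff_le_add', div_le_iff₀ hVS, le_div_iff₀ hVS]
  constructor <;> linarith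

end Euclidean

theorem stmt4 {n : ℕ} (Γ : Set (Fin n → ℝ)) (hΓ : IsWAP Γ) :
    ∃ D : ℝ, ∀ ε > (0:ℝ), ∃ Rε > (0:ℝ), ∀ R > Rε, ∀ x : Fin n → ℝ,
      |((Γ ∩ Metric.ball x R).ncard : ℝ) / volBall n R - D| < ε := by
  obtain ⟨D, hD⟩ := exists_forall_abs_sub_lt_of_forall_approx (l := atTop)
    (f := fun R x => ((Γ ∩ ball x R).ncard : ℝ) / volBall n R) fun ε hε => by
      obtain ⟨R, hR, hW⟩ := hΓ.2 (ε / 2) (half_pos hε)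
      simpa only [mul_div_cancel₀ ε two_ne_zero] using
        hΓ.1.1.exists_forall_abs_density_sub_le (half_pos hε) hR hW
  refine ⟨D, fun ε hε => ?_⟩
  obtain ⟨R₀, hR₀⟩ := eventually_atTop.1 (hD ε hε)
  exact ⟨max R₀ 1, by positivity, fun R hR => hR₀ R (le_of_max_le_left hR.le)⟩
end

section
/- For every A₁,…,A_k ∈ GLₙ(ℝ), the image (Â_k ∘ ⋯ ∘ Â₁)(ℤⁿ) of ℤⁿ under the composition of discretizations is the model set modelled on the window W = (−1/2, 1/2]^{nk} ⊆ ℝ^{nk} and the lattice M ℤ^{n(k+1)} ⊆ ℝ^{n(k+1)}, where M is the block matrix with blocks M_{i,i} = A_i and M_{i,i+1} = −Id for 1 ≤ i ≤ k, and M_{k+1,k+1} = Id (all other blocks zero). -/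
/-!
An integer point `x` lies in the image of `ℤⁿ` under `Â_k ∘ ⋯ ∘ Â₁` exactly when it is the end of a
chain `u₀, …, u_k ∈ ℤⁿ` with `u_{i+1} = π(A_i u_i)`. Since `π(y) = u` means `y - u ∈ (-1/2, 1/2]ⁿ`,
such a chain is the same as a point `M (u₀, …, u_k)` of the lattice whose first `nk` coordinates
`A_i u_i - u_{i+1}` lie in the window, and whose last `n` coordinates are `u_k = x`.
-/

def proj1 (m n : ℕ) (v : Fin (m + n) → ℝ) : Fin m → ℝ := fun i => v (Fin.castAdd n i)

def proj2 (m n : ℕ) (v : Fin (m + n) → ℝ) : Fin n → ℝ := fun i => v (Fin.natAdd m i)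

def IsLattice {d : ℕ} (Λ : Set (Fin d → ℝ)) : Prop :=
  ∃ b : Module.Basis (Fin d) ℝ (Fin d → ℝ),
    Λ = ((Submodule.span ℤ (Set.range ⇑b) : Submodule ℤ (Fin d → ℝ)) : Set (Fin d → ℝ))

def ModelSet (m n : ℕ) (Λ : Set (Fin (m + n) → ℝ)) (W : Set (Fin m → ℝ)) :
    Set (Fin n → ℝ) :=
  {x | ∃ l ∈ Λ, proj1 m n l ∈ W ∧ proj2 m n l = x}

noncomputable def roundP (x : ℝ) : ℤ := ⌈x - 1/2⌉

noncomputable def roundPi {n : ℕ} (x : Fin n → ℝ) : Fin n → ℝ := fun i => (roundP (x i) : ℝ)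

noncomputable def discr {n : ℕ} (A : Matrix (Fin n) (Fin n) ℝ) (x : Fin n → ℝ) :
    Fin n → ℝ :=
  roundPi (A.mulVec x)

def intLat (n : ℕ) : Set (Fin n → ℝ) := {x | ∀ i, ∃ k : ℤ, x i = (k : ℝ)}

open scoped Matrix

lemma roundP_eq_iff (x : ℝ) (m : ℤ) :
    roundP x = m ↔ x - m ∈ Set.Ioc (-(1 : ℝ) / 2) (1 / 2) := by
  rw [roundP, Int.ceil_eq_iff, Set.mem_Ioc]
  constructor <;> rintro ⟨h1, h2⟩ <;> constructor <;> linarith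

lemma intLat_eq_range (n : ℕ) : intLat n = Set.range fun v : Fin n → ℤ => fun j => (v j : ℝ) := by
  ext x
  constructor
  · intro hx
    choose v hv using hx
    exact ⟨v, funext fun j => (hv j).symm⟩
  · rintro ⟨v, rfl⟩ j
    exact ⟨v j, rfl⟩

section DiscrOrbit

variable {n k : ℕ}

def IsDiscrOrbit (A : Fin k → Matrix (Fin n) (Fin n) ℝ) (u : Fin (k + 1) → Fin n → ℤ) : Prop :=
  ∀ i j, roundP ((A i *ᵥ fun j' => (u i.castSucc j' : ℝ)) j) = u i.succ j

lemma isDiscrOrbit_succ_iff (A : Fin (k + 1) → Matrix (Fin n) (Fin n) ℝ)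
    (u : Fin (k + 2) → Fin n → ℤ) :
    IsDiscrOrbit A u ↔
      IsDiscrOrbit (fun i => A i.castSucc) (fun i => u i.castSucc) ∧
        ∀ j, roundP ((A (Fin.last k) *ᵥ fun j' => (u (Fin.last k).castSucc j' : ℝ)) j) =
          u (Fin.last (k + 1)) j := by
  simp only [IsDiscrOrbit, Fin.forall_fin_succ', ← Fin.succ_castSucc, Fin.succ_last]

lemma foldl_discr_image_intLat (A : Fin k → Matrix (Fin n) (Fin n) ℝ) :
    (List.ofFn A).foldl (fun S M => discr M '' S) (intLat n) =
      {x | ∃ u, IsDiscrOrbit A u ∧ (fun j => (u (Fin.last k) j : ℝ)) = x} := by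
  induction k with
  | zero =>
    ext x
    simp only [List.ofFn_zero, List.foldl_nil, intLat_eq_range, IsDiscrOrbit, IsEmpty.forall_iff,
      true_and, Set.mem_range, Set.mem_ofPred_eq]
    exact ⟨fun ⟨v, hv⟩ => ⟨fun _ => v, hv⟩, fun ⟨u, hu⟩ => ⟨u (Fin.last 0), hu⟩⟩
  | succ k ih =>
    rw [List.ofFn_succ', List.concat_eq_append, List.foldl_concat, ih]
    ext x
    simp only [isDiscrOrbit_succ_iff, Set.mem_image, Set.mem_ofPred_eq]
    constructor
    · rintro ⟨_, ⟨u, hu, rfl⟩, rfl⟩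
      refine ⟨Fin.snoc u fun j => roundP ((A (Fin.last k) *ᵥ fun j' => (u (Fin.last k) j' : ℝ)) j),
        ⟨by simpa only [Fin.snoc_castSucc] using hu, fun j => ?_⟩, ?_⟩
      · simp only [Fin.snoc_castSucc, Fin.snoc_last]
      · simp only [Fin.snoc_last]
        rfl
    · rintro ⟨u, ⟨hu, hlast⟩, rfl⟩
      refine ⟨_, ⟨fun i => u i.castSucc, hu, rfl⟩, funext fun j => ?_⟩
      simp only [discr, roundPi, hlast]

end DiscrOrbit

lemma proj1_append {m n : ℕ} (a : Fin m → ℝ) (b : Fin n → ℝ) : proj1 m n (Fin.append a b) = a :=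
  funext (Fin.append_left a b)

lemma proj2_append {m n : ℕ} (a : Fin m → ℝ) (b : Fin n → ℝ) : proj2 m n (Fin.append a b) = b :=
  funext (Fin.append_right a b)

lemma mem_modelSet_range_append {m n : ℕ} {ι : Type*} (f : ι → Fin m → ℝ) (g : ι → Fin n → ℝ)
    (W : Set (Fin m → ℝ)) (x : Fin n → ℝ) :
    x ∈ ModelSet m n {z | ∃ u, z = Fin.append (f u) (g u)} W ↔ ∃ u, f u ∈ W ∧ g u = x := by
  simp only [ModelSet, Set.mem_ofPred_eq]
  constructor
  · rintro ⟨_, ⟨u, rfl⟩, hW, hx⟩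
    exact ⟨u, by rwa [proj1_append] at hW, by rwa [proj2_append] at hx⟩
  · rintro ⟨u, hW, hx⟩
    exact ⟨_, ⟨u, rfl⟩, by rwa [proj1_append], by rwa [proj2_append]⟩

theorem stmt8_general (n k : ℕ) (A : Fin k → Matrix (Fin n) (Fin n) ℝ) :
    (List.ofFn A).foldl (fun S M => discr M '' S) (intLat n) =
      ModelSet (k * n) n
        {z : Fin (k * n + n) → ℝ | ∃ u : Fin (k + 1) → Fin n → ℤ,
          z = Fin.append
                (fun idx : Fin (k * n) =>
                  (A (finProdFinEquiv.symm idx).1).mulVec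
                      (fun j => (u (Fin.castSucc (finProdFinEquiv.symm idx).1) j : ℝ))
                      (finProdFinEquiv.symm idx).2
                    - (u (Fin.succ (finProdFinEquiv.symm idx).1)
                        (finProdFinEquiv.symm idx).2 : ℝ))
                (fun j : Fin n => (u (Fin.last k) j : ℝ))}
        {w : Fin (k * n) → ℝ | ∀ i, w i ∈ Set.Ioc (-(1:ℝ)/2) (1/2)} := by
  rw [foldl_discr_image_intLat]
  ext x
  rw [mem_modelSet_range_append]
  refine exists_congr fun u => and_congr_left' ?_
  simp only [IsDiscrOrbit, Set.mem_ofPred_eq, roundP_eq_iff]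
  constructor
  · exact fun h idx => h _ _
  · intro h i j
    simpa only [Equiv.symm_apply_apply] using h (finProdFinEquiv (i, j))

theorem stmt8 (n k : ℕ) (A : Fin k → Matrix (Fin n) (Fin n) ℝ)
    (hA : ∀ i, IsUnit (A i).det) :
    (List.ofFn A).foldl (fun S M => discr M '' S) (intLat n) =
      ModelSet (k * n) n
        {z : Fin (k * n + n) → ℝ | ∃ u : Fin (k + 1) → Fin n → ℤ,
          z = Fin.append
                (fun idx : Fin (k * n) =>
                  (A (finProdFinEquiv.symm idx).1).mulVec
                      (fun j => (u (Fin.castSucc (finProdFinEquiv.symm idx).1) j : ℝ))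
                      (finProdFinEquiv.symm idx).2
                    - (u (Fin.succ (finProdFinEquiv.symm idx).1)
                        (finProdFinEquiv.symm idx).2 : ℝ))
                (fun j : Fin n => (u (Fin.last k) j : ℝ))}
        {w : Fin (k * n) → ℝ | ∀ i, w i ∈ Set.Ioc (-(1:ℝ)/2) (1/2)} :=
  stmt8_general n k A
end
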